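/- Let V be the collector matrix and W the distributor matrix of a surjection K : Fin n → Fin l, and let Q be an n×n real matrix that is lumpable with respect to K, with quotient matrix Q̂. Then Q·V = V·Q̂ and W·Q·V = Q̂. -/
import Mathlib


/-- The collector matrix of a partition map `K : Fin n → Fin l`:
`V_{ir} = 1` if `K i = r` and `0` otherwise. -/
def collector {n l : ℕ} (K : Fin n → Fin l) : Matrix (Fin n) (Fin l) ℝ :=
  Matrix.of fun i r => if K i = r then 1 else 0

/-- The distributor matrix of a partition map `K : Fin n → Fin l`:
`W_{ri} = 1/|K⁻¹(r)|` if `K i = r` and `0` otherwise. -/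
noncomputable def distributor {n l : ℕ} (K : Fin n → Fin l) : Matrix (Fin l) (Fin n) ℝ :=
  Matrix.of fun r i =>
    if K i = r then (1 : ℝ) / (Finset.univ.filter fun j => K j = r).card else 0

/-- `Q` is lumpable with respect to the partition map `K`: for states in the same class,
the cumulative rates into each class coincide. -/
def Lumpable {n l : ℕ} (K : Fin n → Fin l) (Q : Matrix (Fin n) (Fin n) ℝ) : Prop :=
  ∀ i j : Fin n, K i = K j → ∀ s : Fin l,
    ∑ k ∈ Finset.univ.filter (fun k => K k = s), Q i k =
      ∑ k ∈ Finset.univ.filter (fun k => K k = s), Q j k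

/-- If `Q` is lumpable with respect to a surjection `K` with quotient matrix `Q̂`
(whose entry `Q̂_{rs}` is the common value `Σ_{k : K k = s} Q_{ik}` for any `i` with
`K i = r`), then `Q·V = V·Q̂` and `W·Q·V = Q̂`. -/
theorem lumpable_collector_distributor {n l : ℕ} (hn : 0 < n) (hl : 0 < l)
    (K : Fin n → Fin l) (hK : Function.Surjective K)
    (Q : Matrix (Fin n) (Fin n) ℝ) (hQ : Lumpable K Q)
    (Qh : Matrix (Fin l) (Fin l) ℝ)
    (hQh : ∀ (r s : Fin l) (i : Fin n), K i = r →
      Qh r s = ∑ k ∈ Finset.univ.filter (fun k => K k = s), Q i k) :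
    Q * collector K = collector K * Qh ∧ distributor K * Q * collector K = Qh := by
  have hQV : ∀ (i : Fin n) (s : Fin l), (Q * collector K) i s = Qh (K i) s := by
    intro i s
    rw [Matrix.mul_apply, hQh (K i) s i rfl, Finset.sum_filter]
    simp [collector, mul_ite]
  have h1 : Q * collector K = collector K * Qh := by
    ext i s
    rw [hQV, Matrix.mul_apply]
    simp [collector, ite_mul]
  refine ⟨h1, ?_⟩
  rw [Matrix.mul_assoc]
  ext r s
  rw [Matrix.mul_apply]
  have hcard : (0:ℝ) < (Finset.univ.filter fun j => K j = r).card := by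
    have : (Finset.univ.filter fun j => K j = r).Nonempty := by
      obtain ⟨i, hi⟩ := hK r
      exact ⟨i, by simp [hi]⟩
    exact_mod_cast Finset.card_pos.mpr this
  have : ∀ i, distributor K r i * (Q * collector K) i s =
      if K i = r then (1 : ℝ) / (Finset.univ.filter fun j => K j = r).card * Qh r s else 0 := by
    intro i
    by_cases h : K i = r <;> simp [distributor, h, hQV, ite_mul]
  rw [Finset.sum_congr rfl fun i _ => this i, ← Finset.sum_filter, Finset.sum_const,
    nsmul_eq_mul]
  field_simp
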